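/- arXiv:1507.04772 — 9 statements merged into one kernel-verified Lean document; each statement's English description precedes it below -/
import Mathlib

section
/- Let H be a complete lattice equipped with a commutative, associative multiplication * : H × H → H that preserves arbitrary suprema in each variable and has a unit u. If x * x = x for all x ∈ H and u = ⊤, then x * y = x ⊓ y for all x, y ∈ H (so in particular binary infima distribute over arbitrary suprema in H). -/
/-- Joyal–Tierney characterization of locales among commutative algebras in
sup-lattices: an idempotent commutative monoid structure on a complete lattice,
sup-bilinear with unit `⊤`, is the meet. -/
theorem locale_characterization {H : Type*} [CompleteLattice H]
    (mul : H → H → H) (u : H)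
    (hcomm : ∀ x y, mul x y = mul y x)
    (hassoc : ∀ x y z, mul (mul x y) z = mul x (mul y z))
    (hsupl : ∀ (x : H) (s : Set H), mul (sSup s) x = ⨆ y ∈ s, mul y x)
    (hsupr : ∀ (x : H) (s : Set H), mul x (sSup s) = ⨆ y ∈ s, mul x y)
    (hul : ∀ x, mul u x = x) (hur : ∀ x, mul x u = x)
    (hidem : ∀ x, mul x x = x) (hu : u = ⊤) :
    ∀ x y, mul x y = x ⊓ y := by
  -- monotonicity in the right argument
  have hmono : ∀ x a b : H, a ≤ b → mul x a ≤ mul x b := by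
    intro x a b hab
    have hs : sSup {a, b} = b := by
      simp [sSup_pair, sup_eq_right.mpr hab]
    have := hsupr x {a, b}
    rw [hs] at this
    rw [this]
    exact le_biSup _ (by simp)
  -- mul x y ≤ x and ≤ y
  intro x y
  have h1 : mul x y ≤ x := by
    have := hmono x y ⊤ le_top
    rwa [← hu, hur] at this
  have h2 : mul x y ≤ y := by
    rw [hcomm]
    have := hmono y x ⊤ le_top
    rwa [← hu, hur] at this
  refine le_antisymm (le_inf h1 h2) ?_
  calc x ⊓ y = mul (x ⊓ y) (x ⊓ y) := (hidem _).symm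
    _ ≤ mul x (x ⊓ y) := by rw [hcomm, hcomm x]; exact hmono _ _ _ inf_le_left
    _ ≤ mul x y := hmono _ _ _ inf_le_right
end

section
/- Let H be a complete lattice with a commutative, associative, sup-bilinear multiplication * having unit u, and let S ⊆ H be a set of generators, i.e. every element of H is a supremum of elements of S. If every s ∈ S satisfies s * s = s and s ≤ u, then every w ∈ H satisfies w * w = w and w ≤ u; consequently u = ⊤ and x * y = x ⊓ y for all x, y ∈ H. -/
/-- If the sup-lattice generators of a commutative sup-bilinear algebra are
idempotent and below the unit, then so is every element; hence the algebra is
a locale and its multiplication is the meet. -/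
theorem locale_from_generators {H : Type*} [CompleteLattice H]
    (mul : H → H → H) (u : H) (S : Set H)
    (hcomm : ∀ x y, mul x y = mul y x)
    (hassoc : ∀ x y z, mul (mul x y) z = mul x (mul y z))
    (hsupl : ∀ (x : H) (s : Set H), mul (sSup s) x = ⨆ y ∈ s, mul y x)
    (hsupr : ∀ (x : H) (s : Set H), mul x (sSup s) = ⨆ y ∈ s, mul x y)
    (hul : ∀ x, mul u x = x) (hur : ∀ x, mul x u = x)
    (hgen : ∀ w : H, ∃ T ⊆ S, sSup T = w)
    (hS : ∀ s ∈ S, mul s s = s ∧ s ≤ u) :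
    (∀ w : H, mul w w = w ∧ w ≤ u) ∧ u = ⊤ ∧ ∀ x y, mul x y = x ⊓ y := by
  -- right monotonicity
  have hmonoR : ∀ c a b : H, a ≤ b → mul c a ≤ mul c b := by
    intro c a b hab
    have hb : sSup ({a, b} : Set H) = b := by
      rw [sSup_pair, sup_eq_right.mpr hab]
    calc mul c a ≤ ⨆ y ∈ ({a, b} : Set H), mul c y :=
          le_iSup₂ (f := fun y (_ : y ∈ ({a, b} : Set H)) => mul c y) a (by simp)
      _ = mul c (sSup {a, b}) := (hsupr c {a, b}).symm
      _ = mul c b := by rw [hb]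
  have hmonoL : ∀ c a b : H, a ≤ b → mul a c ≤ mul b c := by
    intro c a b hab
    rw [hcomm a c, hcomm b c]; exact hmonoR c a b hab
  have key : ∀ w : H, mul w w = w ∧ w ≤ u := by
    intro w
    obtain ⟨T, hT, rfl⟩ := hgen w
    have hle : sSup T ≤ u := sSup_le fun s hs => (hS s (hT hs)).2
    refine ⟨le_antisymm ?_ ?_, hle⟩
    · rw [hsupl]
      refine iSup₂_le fun s hs => ?_
      rw [hsupr]
      refine iSup₂_le fun t ht => ?_
      calc mul s t ≤ mul s u := hmonoR s t u (hS t (hT ht)).2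
        _ = s := hur s
        _ ≤ sSup T := le_sSup hs
    · refine sSup_le fun s hs => ?_
      calc s = mul s s := ((hS s (hT hs)).1).symm
        _ ≤ mul (sSup T) s := hmonoL s s (sSup T) (le_sSup hs)
        _ ≤ mul (sSup T) (sSup T) := hmonoR _ s _ (le_sSup hs)
  have hu : u = ⊤ := le_antisymm le_top (key ⊤).2
  refine ⟨key, hu, fun x y => ?_⟩
  apply le_antisymm
  · exact le_inf
      (by calc mul x y ≤ mul x u := hmonoR x y u (key y).2
            _ = x := hur x)
      (by calc mul x y ≤ mul u y := hmonoL y x u (key x).2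
            _ = y := hul y)
  · calc x ⊓ y = mul (x ⊓ y) (x ⊓ y) := ((key (x ⊓ y)).1).symm
      _ ≤ mul x (x ⊓ y) := hmonoL _ _ _ inf_le_left
      _ ≤ mul x y := hmonoR _ _ _ inf_le_right
end

section
/- Let G be a frame, λ : X × Y → G and λ' : X' × Y' → G ℓ-relations, f : X → X', g : Y → Y'. Assume λ is everywhere defined (for all a ∈ X, ⨆_{y ∈ Y} λ(a, y) = ⊤) and λ' is univalued (for all x' ∈ X', b'₁ ≠ b'₂ ∈ Y', λ'(x', b'₁) ⊓ λ'(x', b'₂) = ⊥). If ▷(f, g) holds, i.e. λ(a, b) ≤ λ'(f a, g b) for all a, b, then ◇₁(f, g) holds: for all a ∈ X and b' ∈ Y', λ'(f a, b') = ⨆ {λ(a, y) : y ∈ Y, g y = b'}. -/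
/-- If `λ` is everywhere defined and `λ'` is univalued, then ▷(f,g) implies ◇₁(f,g). -/
theorem triangle_implies_diamond1 {X Y X' Y' G : Type*} [Order.Frame G]
    (lam : X → Y → G) (lam' : X' → Y' → G) (f : X → X') (g : Y → Y')
    (hed : ∀ a : X, (⨆ y : Y, lam a y) = ⊤)
    (huv : ∀ (x' : X') (b'₁ b'₂ : Y'), b'₁ ≠ b'₂ → lam' x' b'₁ ⊓ lam' x' b'₂ = ⊥)
    (htri : ∀ (a : X) (b : Y), lam a b ≤ lam' (f a) (g b)) :
    ∀ (a : X) (b' : Y'),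
      lam' (f a) b' = ⨆ (y : Y) (_ : g y = b'), lam a y := by
  intro a b'
  apply le_antisymm
  · calc lam' (f a) b' = lam' (f a) b' ⊓ ⨆ y, lam a y := by rw [hed a, inf_top_eq]
      _ = ⨆ y, lam' (f a) b' ⊓ lam a y := inf_iSup_eq _ _
      _ ≤ ⨆ (y : Y) (_ : g y = b'), lam a y := by
          apply iSup_le
          intro y
          by_cases h : g y = b'
          · exact inf_le_right.trans (le_iSup₂ (f := fun y _ => lam a y) y h)
          · have : lam' (f a) b' ⊓ lam a y ≤ lam' (f a) b' ⊓ lam' (f a) (g y) :=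
              inf_le_inf_left _ (htri a y)
            rw [huv (f a) b' (g y) (fun hh => h hh.symm)] at this
            exact this.trans bot_le
  · apply iSup₂_le
    intro y hy
    simpa [hy] using htri a y
end

section
/- Let G be a frame, λ : X × Y → G, λ' : X' × Y' → G, and spans p : R → X, p' : R → X', q : S → Y, q' : S → Y' with θ : R × S → G. Assume ◇₁(p, q): for all r ∈ R, b ∈ Y, λ(p r, b) = ⨆ {θ(r, v) : v ∈ S, q v = b}, and ◇₁(p', q'): for all r ∈ R, b' ∈ Y', λ'(p' r, b') = ⨆ {θ(r, v) : v ∈ S, q' v = b'}, and that θ is univalued (for all r and s₁ ≠ s₂ in S, θ(r, s₁) ⊓ θ(r, s₂) = ⊥). Then for all r ∈ R, b ∈ Y, b' ∈ Y': λ(p r, b) ⊓ λ'(p' r, b') = ⨆ {θ(r, v) : v ∈ S, q v = b and q' v = b'}. -/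
/-- Infima of two ℓ-relations along a span compute as a supremum over the span,
given the ◇₁ equations and univaluedness of the connecting ℓ-relation. -/
theorem inf_eq_sup_over_span {X Y X' Y' R S G : Type*} [Order.Frame G]
    (lam : X → Y → G) (lam' : X' → Y' → G)
    (p : R → X) (p' : R → X') (q : S → Y) (q' : S → Y')
    (θ : R → S → G)
    (hd1 : ∀ (r : R) (b : Y), lam (p r) b = ⨆ (v : S) (_ : q v = b), θ r v)
    (hd1' : ∀ (r : R) (b' : Y'), lam' (p' r) b' = ⨆ (v : S) (_ : q' v = b'), θ r v)
    (huv : ∀ (r : R) (s₁ s₂ : S), s₁ ≠ s₂ → θ r s₁ ⊓ θ r s₂ = ⊥) :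
    ∀ (r : R) (b : Y) (b' : Y'),
      lam (p r) b ⊓ lam' (p' r) b' =
        ⨆ (v : S) (_ : q v = b ∧ q' v = b'), θ r v := by
  intro r b b'
  rw [hd1, hd1']
  apply le_antisymm
  · simp only [iSup_inf_eq, inf_iSup_eq]
    refine iSup_le fun s => iSup_le fun hs => iSup_le fun s' => iSup_le fun hs' => ?_
    by_cases h : s' = s
    · subst h
      simp only [inf_idem]
      exact le_iSup₂_of_le _ ⟨hs', hs⟩ le_rfl
    · rw [huv r s' s h]; exact bot_le
  · apply iSup₂_le; intro s ⟨hs, hs'⟩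
    exact le_inf (le_iSup₂_of_le s hs le_rfl) (le_iSup₂_of_le s hs' le_rfl)
end

section
/- Let G be a frame, λ : X × Y → G injective (∀y, ∀a₁ ≠ a₂, λ(a₁,y) ⊓ λ(a₂,y) = ⊥), λ' : X' × Y' → G univalued (∀x', ∀b'₁ ≠ b'₂, λ'(x',b'₁) ⊓ λ'(x',b'₂) = ⊥), and spans p : R → X, p' : R → X', q : S → Y, q' : S → Y' with θ : R × S → G satisfying the ▷ inequalities θ(r,s) ≤ λ(p r, q s) and θ(r,s) ≤ λ'(p' r, q' s) for all r, s. If θ is everywhere defined (∀r, ⨆_s θ(r,s) = ⊤) and surjective (∀s, ⨆_r θ(r,s) = ⊤), then the ◇ equation holds: for all a ∈ X and b' ∈ Y', ⨆ {λ(a, q s) : s ∈ S, q' s = b'} = ⨆ {λ'(p' r, b') : r ∈ R, p r = a}. -/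
/-- If λ is injective, λ' is univalued, the ▷ diagrams hold, and θ is everywhere
defined and surjective, then the ◇(R,S) equation holds. -/
theorem triangles_imply_diamond {X Y X' Y' R S G : Type*} [Order.Frame G]
    (lam : X → Y → G) (lam' : X' → Y' → G)
    (p : R → X) (p' : R → X') (q : S → Y) (q' : S → Y')
    (θ : R → S → G)
    (hin : ∀ (y : Y) (a₁ a₂ : X), a₁ ≠ a₂ → lam a₁ y ⊓ lam a₂ y = ⊥)
    (huv : ∀ (x' : X') (b'₁ b'₂ : Y'), b'₁ ≠ b'₂ → lam' x' b'₁ ⊓ lam' x' b'₂ = ⊥)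
    (htri : ∀ (r : R) (s : S), θ r s ≤ lam (p r) (q s))
    (htri' : ∀ (r : R) (s : S), θ r s ≤ lam' (p' r) (q' s))
    (hed : ∀ r : R, (⨆ s : S, θ r s) = ⊤)
    (hsu : ∀ s : S, (⨆ r : R, θ r s) = ⊤) :
    ∀ (a : X) (b' : Y'),
      (⨆ (s : S) (_ : q' s = b'), lam a (q s)) =
      ⨆ (r : R) (_ : p r = a), lam' (p' r) b' := by
  intro a b'
  apply le_antisymm
  · refine iSup₂_le fun s hs => ?_
    have h : lam a (q s) = ⨆ r, lam a (q s) ⊓ θ r s := by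
      rw [← inf_iSup_eq, hsu s, inf_top_eq]
    rw [h]
    refine iSup_le fun r => ?_
    by_cases hpr : p r = a
    · calc lam a (q s) ⊓ θ r s ≤ θ r s := inf_le_right
        _ ≤ lam' (p' r) (q' s) := htri' r s
        _ = lam' (p' r) b' := by rw [hs]
        _ ≤ _ := le_iSup₂ (f := fun r (_ : p r = a) => lam' (p' r) b') r hpr
    · calc lam a (q s) ⊓ θ r s ≤ lam a (q s) ⊓ lam (p r) (q s) :=
          inf_le_inf_left _ (htri r s)
        _ = ⊥ := hin (q s) a (p r) (Ne.symm hpr)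
        _ ≤ _ := bot_le
  · refine iSup₂_le fun r hr => ?_
    have h : lam' (p' r) b' = ⨆ s, lam' (p' r) b' ⊓ θ r s := by
      rw [← inf_iSup_eq, hed r, inf_top_eq]
    rw [h]
    refine iSup_le fun s => ?_
    by_cases hqs : q' s = b'
    · calc lam' (p' r) b' ⊓ θ r s ≤ θ r s := inf_le_right
        _ ≤ lam (p r) (q s) := htri r s
        _ = lam a (q s) := by rw [hr]
        _ ≤ _ := le_iSup₂ (f := fun s (_ : q' s = b') => lam a (q s)) s hqs
    · calc lam' (p' r) b' ⊓ θ r s ≤ lam' (p' r) b' ⊓ lam' (p' r) (q' s) :=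
          inf_le_inf_left _ (htri' r s)
        _ = ⊥ := huv (p' r) b' (q' s) (Ne.symm hqs)
        _ ≤ _ := bot_le
end

section
/- Let G be a frame, R ⊆ X × X' and S ⊆ Y × Y' relations, and let λ : X × Y → G and λ' : X' × Y' → G be ℓ-bijections. Define θ : R × S → G by θ((a,a'),(y,y')) = λ(a,y) ⊓ λ'(a',y'). Then the ◇(R,S) equation — for all a ∈ X and b' ∈ Y', ⨆ {λ(a,y) : y ∈ Y, (y,b') ∈ S} = ⨆ {λ'(x',b') : x' ∈ X', (a,x') ∈ R} — holds if and only if θ is an ℓ-bijection (on the sets R and S). -/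
/-- The four axioms of an ℓ-relation `μ : A × B → G`. -/
def IsLBijection {A B G : Type*} [CompleteLattice G] (μ : A → B → G) : Prop :=
  (∀ a : A, (⨆ b : B, μ a b) = ⊤) ∧
  (∀ (a : A) (b₁ b₂ : B), b₁ ≠ b₂ → μ a b₁ ⊓ μ a b₂ = ⊥) ∧
  (∀ b : B, (⨆ a : A, μ a b) = ⊤) ∧
  (∀ (b : B) (a₁ a₂ : A), a₁ ≠ a₂ → μ a₁ b ⊓ μ a₂ b = ⊥)

/-- ◇(R,S) holds iff the restriction of the product ℓ-relation to `R × S`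
is an ℓ-bijection. -/
theorem diamond_iff_restriction_lbijection {X X' Y Y' G : Type*} [Order.Frame G]
    (R : Set (X × X')) (S : Set (Y × Y'))
    (lam : X → Y → G) (lam' : X' → Y' → G)
    (hlam : IsLBijection lam) (hlam' : IsLBijection lam') :
    (∀ (a : X) (b' : Y'),
        (⨆ (y : Y) (_ : (y, b') ∈ S), lam a y) =
        ⨆ (x' : X') (_ : (a, x') ∈ R), lam' x' b') ↔
    IsLBijection (fun (r : R) (s : S) =>
      lam r.1.1 s.1.1 ⊓ lam' r.1.2 s.1.2) := by
  obtain ⟨hed, huv, hsu, hin⟩ := hlam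
  obtain ⟨hed', huv', hsu', hin'⟩ := hlam'
  constructor
  · intro hdia
    refine ⟨?_, ?_, ?_, ?_⟩
    · -- ed
      rintro ⟨⟨a, a'⟩, haR⟩
      apply le_antisymm le_top
      calc (⊤ : G) = ⨆ y' : Y', lam' a' y' := (hed' a').symm
        _ ≤ ⨆ s : S, lam a s.1.1 ⊓ lam' a' s.1.2 := by
          apply iSup_le; intro y'
          have h1 : lam' a' y' ≤ ⨆ (y : Y) (_ : (y, y') ∈ S), lam a y := by
            rw [hdia a y']
            exact le_iSup₂ (f := fun x' (_ : (a, x') ∈ R) => lam' x' y') a' haR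
          calc lam' a' y' = lam' a' y' ⊓ lam' a' y' := (inf_idem _).symm
            _ ≤ (⨆ (y : Y) (_ : (y, y') ∈ S), lam a y) ⊓ lam' a' y' :=
              inf_le_inf_right _ h1
            _ = ⨆ (y : Y) (_ : (y, y') ∈ S), lam a y ⊓ lam' a' y' := by
              simp only [iSup_inf_eq]
            _ ≤ ⨆ s : S, lam a s.1.1 ⊓ lam' a' s.1.2 := by
              apply iSup₂_le; intro y hy
              exact le_iSup_of_le ⟨(y, y'), hy⟩ le_rfl
    · -- uv
      rintro ⟨⟨a, a'⟩, haR⟩ ⟨⟨y₁, y₁'⟩, h₁⟩ ⟨⟨y₂, y₂'⟩, h₂⟩ hne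
      have hne' : (y₁, y₁') ≠ (y₂, y₂') := fun h => hne (Subtype.ext h)
      rcases (by
        by_cases h : y₁ = y₂
        · exact Or.inr (fun h' => hne' (by rw [h, h']))
        · exact Or.inl h : y₁ ≠ y₂ ∨ y₁' ≠ y₂') with h | h
      · apply le_antisymm _ bot_le
        calc lam a y₁ ⊓ lam' a' y₁' ⊓ (lam a y₂ ⊓ lam' a' y₂')
            ≤ lam a y₁ ⊓ lam a y₂ :=
              inf_le_inf inf_le_left inf_le_left
          _ = ⊥ := huv a y₁ y₂ h
      · apply le_antisymm _ bot_le
        calc lam a y₁ ⊓ lam' a' y₁' ⊓ (lam a y₂ ⊓ lam' a' y₂')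
            ≤ lam' a' y₁' ⊓ lam' a' y₂' :=
              inf_le_inf inf_le_right inf_le_right
          _ = ⊥ := huv' a' y₁' y₂' h
    · -- su
      rintro ⟨⟨b, b'⟩, hbS⟩
      apply le_antisymm le_top
      calc (⊤ : G) = ⨆ a : X, lam a b := (hsu b).symm
        _ ≤ ⨆ r : R, lam r.1.1 b ⊓ lam' r.1.2 b' := by
          apply iSup_le; intro a
          have h1 : lam a b ≤ ⨆ (x' : X') (_ : (a, x') ∈ R), lam' x' b' := by
            rw [← hdia a b']
            exact le_iSup₂ (f := fun y (_ : (y, b') ∈ S) => lam a y) b hbS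
          calc lam a b = lam a b ⊓ lam a b := (inf_idem _).symm
            _ ≤ lam a b ⊓ ⨆ (x' : X') (_ : (a, x') ∈ R), lam' x' b' :=
              inf_le_inf_left _ h1
            _ = ⨆ (x' : X') (_ : (a, x') ∈ R), lam a b ⊓ lam' x' b' := by
              simp only [inf_iSup_eq]
            _ ≤ ⨆ r : R, lam r.1.1 b ⊓ lam' r.1.2 b' := by
              apply iSup₂_le; intro x' hx'
              exact le_iSup_of_le ⟨(a, x'), hx'⟩ le_rfl
    · -- in
      rintro ⟨⟨b, b'⟩, hbS⟩ ⟨⟨a₁, a₁'⟩, h₁⟩ ⟨⟨a₂, a₂'⟩, h₂⟩ hne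
      have hne' : (a₁, a₁') ≠ (a₂, a₂') := fun h => hne (Subtype.ext h)
      rcases (by
        by_cases h : a₁ = a₂
        · exact Or.inr (fun h' => hne' (by rw [h, h']))
        · exact Or.inl h : a₁ ≠ a₂ ∨ a₁' ≠ a₂') with h | h
      · apply le_antisymm _ bot_le
        calc lam a₁ b ⊓ lam' a₁' b' ⊓ (lam a₂ b ⊓ lam' a₂' b')
            ≤ lam a₁ b ⊓ lam a₂ b :=
              inf_le_inf inf_le_left inf_le_left
          _ = ⊥ := hin b a₁ a₂ h
      · apply le_antisymm _ bot_le
        calc lam a₁ b ⊓ lam' a₁' b' ⊓ (lam a₂ b ⊓ lam' a₂' b')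
            ≤ lam' a₁' b' ⊓ lam' a₂' b' :=
              inf_le_inf inf_le_right inf_le_right
          _ = ⊥ := hin' b' a₁' a₂' h
  · rintro ⟨ted, tuv, tsu, tin⟩ a b'
    apply le_antisymm
    · apply iSup₂_le; intro y hy
      have h := tsu ⟨(y, b'), hy⟩
      calc lam a y = lam a y ⊓ ⊤ := (inf_top_eq _).symm
        _ = lam a y ⊓ ⨆ r : R, lam r.1.1 y ⊓ lam' r.1.2 b' := by rw [h]
        _ = ⨆ r : R, lam a y ⊓ (lam r.1.1 y ⊓ lam' r.1.2 b') := by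
          simp only [inf_iSup_eq]
        _ ≤ ⨆ (x' : X') (_ : (a, x') ∈ R), lam' x' b' := by
          apply iSup_le; rintro ⟨⟨x, x'⟩, hr⟩
          by_cases hx : x = a
          · subst hx
            calc lam x y ⊓ (lam x y ⊓ lam' x' b') ≤ lam' x' b' :=
                le_trans inf_le_right inf_le_right
              _ ≤ _ := le_iSup₂ (f := fun x' (_ : (x, x') ∈ R) => lam' x' b') x' hr
          · calc lam a y ⊓ (lam x y ⊓ lam' x' b')
                ≤ lam a y ⊓ lam x y := inf_le_inf_left _ inf_le_left
              _ = ⊥ := hin y a x (fun h => hx h.symm)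
              _ ≤ _ := bot_le
    · apply iSup₂_le; intro x' hx'
      have h := ted ⟨(a, x'), hx'⟩
      calc lam' x' b' = lam' x' b' ⊓ ⊤ := (inf_top_eq _).symm
        _ = lam' x' b' ⊓ ⨆ s : S, lam a s.1.1 ⊓ lam' x' s.1.2 := by rw [h]
        _ = ⨆ s : S, lam' x' b' ⊓ (lam a s.1.1 ⊓ lam' x' s.1.2) := by
          simp only [inf_iSup_eq]
        _ ≤ ⨆ (y : Y) (_ : (y, b') ∈ S), lam a y := by
          apply iSup_le; rintro ⟨⟨y, y'⟩, hs⟩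
          by_cases hy' : y' = b'
          · subst hy'
            calc lam' x' y' ⊓ (lam a y ⊓ lam' x' y') ≤ lam a y :=
                le_trans inf_le_right inf_le_left
              _ ≤ _ := le_iSup₂ (f := fun y (_ : (y, y') ∈ S) => lam a y) y hs
          · calc lam' x' b' ⊓ (lam a y ⊓ lam' x' y')
                ≤ lam' x' b' ⊓ lam' x' y' := inf_le_inf_left _ inf_le_right
              _ = ⊥ := huv' x' b' y' (fun h => hy' h.symm)
              _ ≤ _ := bot_le
end

section
/- Let G be a frame and λ : X × Y → G an ℓ-relation. Define the inverse-image operator λ* : (Y → G) → (X → G) by λ*(θ)(x) = ⨆_{y ∈ Y} (θ(y) ⊓ λ(x, y)). Then: (1) λ* preserves the top element (λ*(⊤) = ⊤, where ⊤ is the constant-⊤ function) if and only if λ is everywhere defined; and (2) λ* preserves binary pointwise infima (λ*(θ ⊓ θ') = λ*(θ) ⊓ λ*(θ') for all θ, θ' : Y → G) if and only if λ is univalued, where 'univalued' means: for all x ∈ X, y₁ ≠ y₂ ∈ Y, λ(x, y₁) ⊓ λ(x, y₂) = ⊥. -/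
/-- The inverse image of an ℓ-relation. -/
def lamInvImage {X Y G : Type*} [CompleteLattice G] (lam : X → Y → G)
    (θ : Y → G) : X → G :=
  fun x => ⨆ y : Y, θ y ⊓ lam x y

/-- The inverse image preserves `⊤` iff the ℓ-relation is everywhere defined,
and preserves binary pointwise infima iff the ℓ-relation is univalued. -/
theorem lamInvImage_top_inf_characterization {X Y G : Type*} [Order.Frame G]
    (lam : X → Y → G) :
    ((lamInvImage lam ⊤ = ⊤) ↔ ∀ x : X, (⨆ y : Y, lam x y) = ⊤) ∧
    ((∀ θ θ' : Y → G, lamInvImage lam (θ ⊓ θ') = lamInvImage lam θ ⊓ lamInvImage lam θ') ↔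
      ∀ (x : X) (y₁ y₂ : Y), y₁ ≠ y₂ → lam x y₁ ⊓ lam x y₂ = ⊥) := by
  constructor
  · constructor
    · intro h x
      have := congrFun h x
      simpa [lamInvImage] using this
    · intro h
      funext x
      simpa [lamInvImage] using h x
  · constructor
    · intro h x y₁ y₂ hne
      classical
      have key := congrFun (h (fun y => if y = y₁ then ⊤ else ⊥)
        (fun y => if y = y₂ then ⊤ else ⊥)) x
      simp only [lamInvImage, Pi.inf_apply] at key
      have hL : (⨆ y, ((if y = y₁ then (⊤:G) else ⊥) ⊓ (if y = y₂ then (⊤:G) else ⊥))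
          ⊓ lam x y) = ⊥ := by
        simp only [iSup_eq_bot]
        intro y
        by_cases h1 : y = y₁
        · subst h1; rw [if_pos rfl, if_neg hne]; simp
        · rw [if_neg h1]; simp
      have hA : (⨆ y, (if y = y₁ then (⊤:G) else ⊥) ⊓ lam x y) = lam x y₁ := by
        apply le_antisymm
        · apply iSup_le; intro y; by_cases hy : y = y₁ <;> simp [hy]
        · exact le_trans (by simp)
            (le_iSup (fun y => (if y = y₁ then (⊤:G) else ⊥) ⊓ lam x y) y₁)
      have hB : (⨆ y, (if y = y₂ then (⊤:G) else ⊥) ⊓ lam x y) = lam x y₂ := by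
        apply le_antisymm
        · apply iSup_le; intro y; by_cases hy : y = y₂ <;> simp [hy]
        · exact le_trans (by simp)
            (le_iSup (fun y => (if y = y₂ then (⊤:G) else ⊥) ⊓ lam x y) y₂)
      rw [hL, hA, hB] at key
      exact key.symm
    · intro h θ θ'
      funext x
      simp only [lamInvImage, Pi.inf_apply]
      rw [iSup_inf_eq]
      apply le_antisymm
      · apply iSup_le; intro y
        refine le_trans ?_ (le_iSup _ y)
        refine le_inf (inf_le_inf inf_le_left le_rfl) ?_
        exact le_trans (inf_le_inf inf_le_right le_rfl)
          (le_iSup (fun y => θ' y ⊓ lam x y) y)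
      · apply iSup_le; intro y₁
        rw [inf_iSup_eq]
        apply iSup_le; intro y₂
        by_cases hy : y₁ = y₂
        · subst hy
          refine le_trans ?_ (le_iSup _ y₁)
          refine le_inf (le_inf ?_ ?_) ?_
          · exact inf_le_of_left_le inf_le_left
          · exact inf_le_of_right_le inf_le_left
          · exact inf_le_of_left_le inf_le_right
        · have hb : lam x y₁ ⊓ lam x y₂ = ⊥ := h x y₁ y₂ hy
          have : (θ y₁ ⊓ lam x y₁) ⊓ (θ' y₂ ⊓ lam x y₂) ≤ ⊥ := by
            rw [← hb]
            exact inf_le_inf inf_le_right inf_le_right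
          exact le_trans this bot_le
end

section
/- Let G be a frame, μ : X × X → G and μ' : X' × X' → G ℓ-bijections, and f : X → X' a function satisfying μ(a, b) ≤ μ'(f a, f b) for all a, b ∈ X. Then for all a, b ∈ X: μ'(f a, f b) = ⨆ {μ(a, x) : x ∈ X, f x = f b}. In particular, if f is injective then μ'(f a, f b) = μ(a, b) for all a, b ∈ X. -/
/-- A morphism of `G`-sets computes the action on the image; for monomorphisms
the action is preserved on the nose. -/
theorem action_morphism_formula {X X' G : Type*} [Order.Frame G]
    (μ : X → X → G) (μ' : X' → X' → G)
    (hμ : IsLBijection μ) (hμ' : IsLBijection μ')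
    (f : X → X') (htri : ∀ a b : X, μ a b ≤ μ' (f a) (f b)) :
    (∀ a b : X, μ' (f a) (f b) = ⨆ (x : X) (_ : f x = f b), μ a x) ∧
    (Function.Injective f → ∀ a b : X, μ' (f a) (f b) = μ a b) := by
  obtain ⟨hed, huv, hsu, hin⟩ := hμ
  obtain ⟨hed', huv', hsu', hin'⟩ := hμ'
  have main : ∀ a b : X, μ' (f a) (f b) = ⨆ (x : X) (_ : f x = f b), μ a x := by
    intro a b
    apply le_antisymm
    · have : μ' (f a) (f b) = μ' (f a) (f b) ⊓ ⨆ x, μ a x := by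
        rw [hed a, inf_top_eq]
      rw [this, inf_iSup_eq]
      apply iSup_le
      intro x
      by_cases hx : f x = f b
      · exact le_trans inf_le_right (le_iSup_of_le x (le_iSup_of_le hx le_rfl))
      · have : μ' (f a) (f b) ⊓ μ a x ≤ μ' (f a) (f b) ⊓ μ' (f a) (f x) :=
          inf_le_inf_left _ (htri a x)
        rw [huv' (f a) (f b) (f x) (fun h => hx h.symm)] at this
        exact le_trans this bot_le
    · apply iSup_le; intro x; apply iSup_le; intro hx
      calc μ a x ≤ μ' (f a) (f x) := htri a x
        _ = μ' (f a) (f b) := by rw [hx]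
  refine ⟨main, fun hinj a b => ?_⟩
  rw [main a b]
  apply le_antisymm
  · apply iSup_le; intro x; apply iSup_le; intro hx
    rw [hinj hx]
  · exact le_iSup_of_le b (le_iSup_of_le rfl le_rfl)
end

section
/- Let H be a frame, X and Y sets, and let λ_X : X × X → H, λ_Y : Y × Y → H, λ_{XY} : (X × Y) × (X × Y) → H be ℓ-relations. Assume λ_{XY} is univalued, and that the ◇₁ equations for the two projections hold: for all a, a' ∈ X and b ∈ Y, λ_X(a, a') = ⨆_{y ∈ Y} λ_{XY}((a,b),(a',y)); and for all b, b' ∈ Y and a ∈ X, λ_Y(b, b') = ⨆_{x ∈ X} λ_{XY}((a,b),(x,b')). Then for all a, a' ∈ X and b, b' ∈ Y: λ_X(a, a') ⊓ λ_Y(b, b') = λ_{XY}((a,b),(a',b')). -/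
/-- A univalued ℓ-relation on a product whose ◇₁ equations for the two
projections hold computes the infimum of the factor ℓ-relations. -/
theorem product_cone_inf {X Y H : Type*} [Order.Frame H]
    (lamX : X → X → H) (lamY : Y → Y → H)
    (lamXY : (X × Y) → (X × Y) → H)
    (huv : ∀ (p : X × Y) (q₁ q₂ : X × Y), q₁ ≠ q₂ →
      lamXY p q₁ ⊓ lamXY p q₂ = ⊥)
    (hπ₁ : ∀ (a a' : X) (b : Y), lamX a a' = ⨆ y : Y, lamXY (a, b) (a', y))
    (hπ₂ : ∀ (b b' : Y) (a : X), lamY b b' = ⨆ x : X, lamXY (a, b) (x, b')) :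
    ∀ (a a' : X) (b b' : Y),
      lamX a a' ⊓ lamY b b' = lamXY (a, b) (a', b') := by
  intro a a' b b'
  apply le_antisymm
  · rw [hπ₁ a a' b, hπ₂ b b' a, iSup_inf_eq]
    refine iSup_le fun y => ?_
    rw [inf_iSup_eq]
    refine iSup_le fun x => ?_
    by_cases h : ((a', y) : X × Y) = (x, b')
    · obtain ⟨rfl, rfl⟩ := Prod.mk.injEq .. ▸ h
      simp
    · rw [huv _ _ _ h]; exact bot_le
  · exact le_inf
      ((le_iSup (fun y => lamXY (a, b) (a', y)) b').trans_eq (hπ₁ a a' b).symm)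
      ((le_iSup (fun x => lamXY (a, b) (x, b')) a').trans_eq (hπ₂ b b' a).symm)
end
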